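/- arXiv:2505.00477 — 4 statements merged into one kernel-verified Lean document; each statement's English description precedes it below -/
import Mathlib

section
/- Let F be a free group of finite rank r, and let B be a basis of F that is minimal-total-length in its conjugacy class (i.e., there is no g in F such that conjugating every element of B by g strictly decreases the sum of the word lengths of the basis elements). Then no primitivity-blocking word appears as a subword of any element of B. (A word v is primitivity-blocking if v is not a subword of any cyclically reduced primitive element of F; an element is primitive if it belongs to some basis of F.) -/
open FreeGroup

/-- The free group of rank `r` on the basis `Fin r`. -/
abbrev F (r : ℕ) := FreeGroup (Fin r)

/-- `v` is a subword of `u`: the reduced word of `v` occurs as a contiguous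
block of the reduced word of `u`. -/
def Subword {α : Type*} [DecidableEq α] (v u : FreeGroup α) : Prop :=
  v.toWord <:+: u.toWord

/-- `u` is cyclically reduced: the first letter of its reduced word is not the
inverse of its last letter. -/
def CyclRed {α : Type*} [DecidableEq α] (u : FreeGroup α) : Prop :=
  ∀ a ∈ u.toWord.head?, ∀ b ∈ u.toWord.getLast?, a ≠ (b.1, !b.2)

/-- `u` is primitive: some automorphism sends a generator to `u`
(equivalently, `u` belongs to a basis). -/
def IsPrimitive {α : Type*} [DecidableEq α] (u : FreeGroup α) : Prop :=
  ∃ (φ : FreeGroup α ≃* FreeGroup α) (i : α), φ (FreeGroup.of i) = u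

/-- `v` is primitivity-blocking: it is not a subword of any cyclically reduced
primitive element. -/
def PrimitivityBlocking {α : Type*} [DecidableEq α] (v : FreeGroup α) : Prop :=
  ∀ u : FreeGroup α, IsPrimitive u → CyclRed u → ¬ Subword v u

/-- Reduced word length. -/
def len {α : Type*} [DecidableEq α] (u : FreeGroup α) : ℕ := u.toWord.length

/-- `v` is `w`-orbit-blocking: for every automorphism `φ`, `v` is not a subword
of the cyclic reduction of `φ w` (i.e. of any cyclically reduced element
conjugate to `φ w`). -/
def OrbitBlocking {α : Type*} [DecidableEq α] (w v : FreeGroup α) : Prop :=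
  ∀ (φ : FreeGroup α ≃* FreeGroup α) (c : FreeGroup α),
    CyclRed c → IsConj c (φ w) → ¬ Subword v c

/-- A word is slender if some generator occurs (with exponent `±1`) at most
once in its reduced word. -/
def Slender {α : Type*} [DecidableEq α] (w : FreeGroup α) : Prop :=
  ∃ x : α, (w.toWord.countP fun p => decide (p.1 = x)) ≤ 1

/-!
If `B i` is cyclically reduced it is itself a cyclically reduced primitive element, so it
contains no primitivity-blocking word. Otherwise its reduced word is `t w t⁻¹` for a letter `t`,
and conjugating by `t` shortens `B i` by two; by minimality some other `B j` must get longer,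
so `B j` neither starts with `t` nor ends with `t⁻¹`. Then `B i * B j` is written without
cancellation, is cyclically reduced, contains `B i` as a subword, and is primitive, being the
image of `x_i` under the Nielsen transformation `x_i ↦ x_i x_j` followed by the automorphism
defining `B`.
-/

theorem Fintype.exists_lt_of_sum_le_of_lt {ι M : Type*} [Fintype ι] [AddCommMonoid M]
    [LinearOrder M] [IsOrderedCancelAddMonoid M] {f g : ι → M} (hle : ∑ k, f k ≤ ∑ k, g k)
    {i : ι} (hi : g i < f i) : ∃ j, f j < g j := by
  by_contra! h
  exact (Finset.sum_lt_sum (fun j _ ↦ h j) ⟨i, Finset.mem_univ i, hi⟩).not_ge hle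

open List

namespace FreeGroup

variable {α : Type*}

theorem inv_mk_singleton (t : α × Bool) : (mk [t])⁻¹ = mk [(t.1, !t.2)] := by
  simp [inv_mk, invRev]

variable [DecidableEq α]

theorem eq_mk_mul_mk_of_toWord_eq {z : FreeGroup α} {L₁ L₂ : List (α × Bool)}
    (h : z.toWord = L₁ ++ L₂) : z = mk L₁ * mk L₂ := by
  rw [mul_mk, ← h, mk_toWord]

theorem toWord_mul_of_isReduced {x y : FreeGroup α} (h : IsReduced (x.toWord ++ y.toWord)) :
    (x * y).toWord = x.toWord ++ y.toWord := by
  rw [toWord_mul, h.reduce_eq]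

theorem len_mk_le (L : List (α × Bool)) : len (mk L) ≤ L.length := norm_mk_le

theorem len_conj_le_of_head? {z : FreeGroup α} {t : α × Bool} (h : z.toWord.head? = some t) :
    len ((mk [t])⁻¹ * z * mk [t]) ≤ len z := by
  obtain ⟨L, hL⟩ := head?_eq_some_iff.1 h
  calc len ((mk [t])⁻¹ * z * mk [t]) = len (mk (L ++ [t])) := by
        rw [eq_mk_mul_mk_of_toWord_eq (L₁ := [t]) hL, inv_mul_cancel_left, mul_mk]
    _ ≤ (L ++ [t]).length := len_mk_le _
    _ = len z := by simp [len, hL]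

theorem len_conj_le_of_getLast? {z : FreeGroup α} {t : α × Bool}
    (h : z.toWord.getLast? = some (t.1, !t.2)) : len ((mk [t])⁻¹ * z * mk [t]) ≤ len z := by
  obtain ⟨L, hL⟩ := getLast?_eq_some_iff.1 h
  calc len ((mk [t])⁻¹ * z * mk [t]) = len (mk ((t.1, !t.2) :: L)) := by
        rw [eq_mk_mul_mk_of_toWord_eq hL, ← inv_mk_singleton, mul_assoc, inv_mul_cancel_right,
          inv_mk_singleton, mul_mk, singleton_append]
    _ ≤ ((t.1, !t.2) :: L).length := len_mk_le _
    _ = len z := by simp [len, hL]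

theorem len_conj_add_two {z : FreeGroup α} {t : α × Bool} {M : List (α × Bool)}
    (h : z.toWord = t :: (M ++ [(t.1, !t.2)])) : len ((mk [t])⁻¹ * z * mk [t]) + 2 = len z := by
  have hM : IsReduced M := (isReduced_toWord (x := z)).infix ⟨[t], [(t.1, !t.2)], by simp [h]⟩
  have hconj : (mk [t])⁻¹ * z * mk [t] = mk M := by
    have hz : z = mk [t] * mk M * (mk [t])⁻¹ := by
      rw [inv_mk_singleton, mul_mk, mul_mk, ← mk_toWord (x := z), h]
      rfl
    rw [hz]
    group
  calc len ((mk [t])⁻¹ * z * mk [t]) + 2 = M.length + 2 := by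
        rw [hconj, len, toWord_mk, hM.reduce_eq]
    _ = len z := by simp [len, h]

theorem exists_toWord_eq_of_not_cyclRed {u : FreeGroup α} (h : ¬ CyclRed u) :
    ∃ t M, u.toWord = t :: (M ++ [(t.1, !t.2)]) := by
  simp only [CyclRed, not_forall, not_not] at h
  obtain ⟨t, ht, b, hb, rfl⟩ := h
  obtain ⟨L, hL⟩ : ∃ L, u.toWord = (b.1, !b.2) :: L := by
    rcases hu : u.toWord with _ | ⟨a, L⟩ <;> simp_all
  rcases eq_nil_or_concat L with rfl | ⟨M, c, rfl⟩
  · simp [hL, Prod.ext_iff] at hb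
  · rw [hL, concat_eq_append, ← cons_append, getLast?_concat, Option.mem_some_iff] at hb
    exact ⟨(b.1, !b.2), M, by simp [hL, hb]⟩

theorem toWord_mul_eq_append {x y : FreeGroup α} {t : α × Bool}
    (hx : x.toWord.getLast? = some (t.1, !t.2)) (hy : y.toWord.head? ≠ some t) :
    (x * y).toWord = x.toWord ++ y.toWord := by
  refine toWord_mul_of_isReduced (IsChain.append isReduced_toWord isReduced_toWord ?_)
  intro a ha b hb hab
  rw [hx, Option.mem_some_iff] at ha
  rw [Option.mem_def] at hb
  subst ha
  by_contra hne
  obtain ⟨b₁, b₂⟩ := b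
  obtain ⟨t₁, t₂⟩ := t
  simp_all

theorem cyclRed_mul {x y : FreeGroup α} {t : α × Bool} (hxhead : x.toWord.head? = some t)
    (hxlast : x.toWord.getLast? = some (t.1, !t.2)) (hy : y ≠ 1)
    (hyhead : y.toWord.head? ≠ some t) (hylast : y.toWord.getLast? ≠ some (t.1, !t.2)) :
    CyclRed (x * y) := by
  have hy' : y.toWord ≠ [] := mt toWord_eq_nil_iff.1 hy
  rw [CyclRed, toWord_mul_eq_append hxlast hyhead, head?_append, hxhead,
    getLast?_append_of_ne_nil _ hy']
  intro a ha b hb hab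
  simp only [Option.some_or, Option.mem_some_iff] at ha
  subst ha
  apply hylast
  rw [Option.mem_def] at hb
  simp [hb, hab]

def transvection {i j : α} (hij : i ≠ j) : FreeGroup α ≃* FreeGroup α :=
  MonoidHom.toMulEquiv (lift (Function.update of i (of i * of j)))
    (lift (Function.update of i (of i * (of j)⁻¹)))
    (by ext k; rcases eq_or_ne k i with rfl | hk <;> simp [hij.symm, *])
    (by ext k; rcases eq_or_ne k i with rfl | hk <;> simp [hij.symm, *])

theorem transvection_of_self {i j : α} (hij : i ≠ j) : transvection hij (of i) = of i * of j := by
  simp [transvection]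

theorem isPrimitive_mul {i j : α} (hij : i ≠ j) (φ : FreeGroup α ≃* FreeGroup α) :
    IsPrimitive (φ (of i) * φ (of j)) :=
  ⟨(transvection hij).trans φ, i, by simp [transvection_of_self]⟩

end FreeGroup

/-- No primitivity-blocking word is a subword of an element of a
conjugacy-length-minimal basis. -/
theorem stmt0 (r : ℕ) (B : Fin r → F r)
    (hB : ∃ φ : F r ≃* F r, ∀ i, φ (FreeGroup.of i) = B i)
    (hmin : ∀ g : F r, (∑ i, len (B i)) ≤ ∑ i, len (g⁻¹ * B i * g)) :
    ∀ (i : Fin r) (v : F r), PrimitivityBlocking v → ¬ Subword v (B i) := by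
  intro i v hv hsub
  obtain ⟨φ, hφ⟩ := hB
  by_cases hcyc : CyclRed (B i)
  · exact hv (B i) ⟨φ, i, hφ i⟩ hcyc hsub
  obtain ⟨t, M, hword⟩ := exists_toWord_eq_of_not_cyclRed hcyc
  have hhead : (B i).toWord.head? = some t := by rw [hword, head?_cons]
  have hlast : (B i).toWord.getLast? = some (t.1, !t.2) := by
    rw [hword, ← cons_append, getLast?_concat]
  have hshort : len ((mk [t])⁻¹ * B i * mk [t]) < len (B i) := by
    have := len_conj_add_two hword
    omega
  obtain ⟨j, hj⟩ := Fintype.exists_lt_of_sum_le_of_lt (hmin (mk [t])) hshort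
  have hij : i ≠ j := by
    rintro rfl
    exact lt_asymm hj hshort
  have hBj : B j ≠ 1 := by
    rintro h
    rw [h, mul_one, inv_mul_cancel] at hj
    exact lt_irrefl _ hj
  have hjhead : (B j).toWord.head? ≠ some t := fun h ↦ (len_conj_le_of_head? h).not_gt hj
  have hjlast : (B j).toWord.getLast? ≠ some (t.1, !t.2) :=
    fun h ↦ (len_conj_le_of_getLast? h).not_gt hj
  have hprim : IsPrimitive (B i * B j) := by
    simpa only [hφ] using isPrimitive_mul hij φ
  refine hv _ hprim (cyclRed_mul hhead hlast hBj hjhead hjlast) (hsub.trans ?_)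
  rw [toWord_mul_eq_append hlast hjhead]
  exact infix_append [] _ _
end

section
/- In the free group F_r with r ≥ 3, for every k ≥ 1 the word x_1^k x_2^k ... x_r^k is not primitivity-blocking: there exists a cyclically reduced primitive element of F_r containing x_1^k x_2^k ... x_r^k as a subword. -/
open FreeGroup

/-!
Write `W = x_{i₁}^k ⋯ x_{iₙ}^k` for a list of generators not containing `x_c`, and let `x_b ≠ x_c`.
The element `p = W x_c^k W⁻¹ x_b` is the image of `x_b` under the transvection `x_b ↦ x_c^k x_b`
followed by the conjugation `x_c ↦ W x_c W⁻¹`; both are automorphisms because the words they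
insert do not involve the generator they move. So `p` is primitive. If `x_b` is not the first
letter of `W`, the word `x_{i₁}^k ⋯ x_{iₙ}^k x_c^k x_{iₙ}^{-k} ⋯ x_{i₁}^{-k} x_b` is reduced, so
it is the reduced word of `p`; it starts with `W x_c^k` and both its ends are positive letters.
For `F_r` take `W = x_1^k ⋯ x_{r-1}^k`, `x_c = x_r` and `x_b = x_2` (which is `of 1`, as `Fin r`
starts at `0`).
-/

namespace List

variable {α : Type*}

theorem head?_flatMap_replicate {k : ℕ} (hk : k ≠ 0) (l : List α) (s : Bool) :
    (l.flatMap fun i => replicate k (i, s)).head? = l.head?.map (·, s) := by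
  cases l <;> simp [head?_replicate, hk]

theorem getLast?_flatMap_replicate {k : ℕ} (hk : k ≠ 0) (l : List α) (s : Bool) :
    (l.flatMap fun i => replicate k (i, s)).getLast? = l.getLast?.map (·, s) := by
  induction l using List.reverseRecOn <;> simp [getLast?_replicate, hk]

end List

namespace FreeGroup

open List

variable {α : Type*}

def prodPow (l : List α) (k : ℕ) : FreeGroup α := (l.map fun i => of i ^ k).prod

theorem prodPow_append_singleton (l : List α) (c : α) (k : ℕ) :
    prodPow (l ++ [c]) k = prodPow l k * of c ^ k := by
  simp [prodPow]

theorem prodPow_cons (a : α) (l : List α) (k : ℕ) :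
    prodPow (a :: l) k = of a ^ k * prodPow l k :=
  prod_cons

theorem prodPow_mem_closure {l : List α} {c : α} (hc : c ∉ l) (k : ℕ) :
    prodPow l k ∈ Subgroup.closure (of '' {c}ᶜ) := by
  refine Subgroup.list_prod_mem _ fun x hx => ?_
  obtain ⟨i, hi, rfl⟩ := mem_map.1 hx
  exact pow_mem (Subgroup.subset_closure (Set.mem_image_of_mem of (ne_of_mem_of_not_mem hi hc))) k

variable [DecidableEq α]

theorem toWord_mul_eq_append_s4 {x y : FreeGroup α}
    (h : ∀ a ∈ x.toWord.getLast?, ∀ b ∈ y.toWord.head?, a.1 = b.1 → a.2 = b.2) :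
    (x * y).toWord = x.toWord ++ y.toWord := by
  rw [toWord_mul]
  exact IsReduced.reduce_eq (isChain_append.2 ⟨isReduced_toWord, isReduced_toWord, h⟩)

theorem head?_toWord_inv (x : FreeGroup α) :
    x⁻¹.toWord.head? = x.toWord.getLast?.map fun a => (a.1, !a.2) := by
  rw [toWord_inv, invRev, head?_reverse, getLast?_map]

theorem getLast?_toWord_inv (x : FreeGroup α) :
    x⁻¹.toWord.getLast? = x.toWord.head?.map fun a => (a.1, !a.2) := by
  rw [toWord_inv, invRev, getLast?_reverse, head?_map]

theorem toWord_prodPow (l : List α) (k : ℕ) :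
    (prodPow l k).toWord = l.flatMap fun i => replicate k (i, true) := by
  induction l with
  | nil => simp [prodPow]
  | cons a l ih =>
    rw [prodPow_cons, flatMap_cons, ← toWord_of_pow, ← ih]
    refine toWord_mul_eq_append_s4 fun x hx y hy _ => ?_
    rw [toWord_of_pow] at hx
    rw [ih] at hy
    obtain ⟨i, -, hyi⟩ := mem_flatMap.1 (mem_of_mem_head? hy)
    rw [eq_of_mem_replicate (mem_of_mem_getLast? hx), eq_of_mem_replicate hyi]

section Sandwich

def sandwichHom (a : α) (u w : FreeGroup α) : FreeGroup α →* FreeGroup α :=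
  FreeGroup.lift (Function.update of a (u * of a * w))

@[simp]
theorem sandwichHom_of_self (a : α) (u w : FreeGroup α) :
    sandwichHom a u w (of a) = u * of a * w := by
  simp [sandwichHom]

@[simp]
theorem sandwichHom_of_of_ne {a j : α} (u w : FreeGroup α) (h : j ≠ a) :
    sandwichHom a u w (of j) = of j := by
  simp [sandwichHom, h]

theorem sandwichHom_apply_of_mem_closure {a : α} (u w : FreeGroup α) {x : FreeGroup α}
    (hx : x ∈ Subgroup.closure (of '' {a}ᶜ)) : sandwichHom a u w x = x := by
  refine MonoidHom.eqOn_closure (g := MonoidHom.id _) ?_ hx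
  rintro _ ⟨j, hj, rfl⟩
  exact sandwichHom_of_of_ne u w hj

theorem sandwichHom_comp_sandwichHom_inv {a : α} {u w : FreeGroup α}
    (hu : u ∈ Subgroup.closure (of '' {a}ᶜ)) (hw : w ∈ Subgroup.closure (of '' {a}ᶜ)) :
    (sandwichHom a u w).comp (sandwichHom a u⁻¹ w⁻¹) = MonoidHom.id _ := by
  ext j
  by_cases hj : j = a
  · subst hj
    simp [sandwichHom_apply_of_mem_closure u w hu, sandwichHom_apply_of_mem_closure u w hw]
    group
  · simp [hj]

def sandwichEquiv (a : α) {u w : FreeGroup α}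
    (hu : u ∈ Subgroup.closure (of '' {a}ᶜ)) (hw : w ∈ Subgroup.closure (of '' {a}ᶜ)) :
    FreeGroup α ≃* FreeGroup α :=
  (sandwichHom a u w).toMulEquiv (sandwichHom a u⁻¹ w⁻¹)
    (by simpa using sandwichHom_comp_sandwichHom_inv (inv_mem hu) (inv_mem hw))
    (sandwichHom_comp_sandwichHom_inv hu hw)

@[simp]
theorem sandwichEquiv_apply {a : α} {u w : FreeGroup α}
    (hu : u ∈ Subgroup.closure (of '' {a}ᶜ)) (hw : w ∈ Subgroup.closure (of '' {a}ᶜ))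
    (x : FreeGroup α) : sandwichEquiv a hu hw x = sandwichHom a u w x :=
  rfl

end Sandwich

variable {l : List α} {b c : α} {k : ℕ}

theorem isPrimitive_prodPow_mul_pow_mul_inv_mul (hc : c ∉ l) (hbc : b ≠ c) (k : ℕ) :
    IsPrimitive (prodPow l k * of c ^ k * (prodPow l k)⁻¹ * of b) := by
  have hcb : of c ^ k ∈ Subgroup.closure (of '' {b}ᶜ) :=
    pow_mem (Subgroup.subset_closure (Set.mem_image_of_mem of hbc.symm)) k
  refine ⟨(sandwichEquiv b hcb (one_mem _)).trans
    (sandwichEquiv c (prodPow_mem_closure hc k) (inv_mem (prodPow_mem_closure hc k))), b, ?_⟩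
  simp [hbc, conj_pow]

theorem toWord_prodPow_mul_inv_mul_of (hc : c ∉ l) (hbl : ∀ a ∈ l.head?, a ≠ b) (hk : k ≠ 0) :
    (prodPow (l ++ [c]) k * (prodPow l k)⁻¹ * of b).toWord =
      (prodPow (l ++ [c]) k).toWord ++ (prodPow l k)⁻¹.toWord ++ [(b, true)] := by
  have hV : (prodPow (l ++ [c]) k).toWord.getLast? = some (c, true) := by
    rw [toWord_prodPow, getLast?_flatMap_replicate hk, getLast?_concat, Option.map_some]
  have hW_head : (prodPow l k)⁻¹.toWord.head? = l.getLast?.map (·, false) := by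
    rw [head?_toWord_inv, toWord_prodPow, getLast?_flatMap_replicate hk, Option.map_map]; rfl
  have hW_last : (prodPow l k)⁻¹.toWord.getLast? = l.head?.map (·, false) := by
    rw [getLast?_toWord_inv, toWord_prodPow, head?_flatMap_replicate hk, Option.map_map]; rfl
  have hVW : (prodPow (l ++ [c]) k * (prodPow l k)⁻¹).toWord =
      (prodPow (l ++ [c]) k).toWord ++ (prodPow l k)⁻¹.toWord := by
    refine toWord_mul_eq_append_s4 fun x hx y hy hxy => ?_
    rw [hV, Option.mem_some_iff] at hx
    rw [hW_head, Option.mem_map] at hy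
    obtain ⟨i, hi, rfl⟩ := hy
    subst hx
    obtain rfl : c = i := hxy
    exact absurd (mem_of_mem_getLast? hi) hc
  rw [← hVW, ← toWord_of b]
  refine toWord_mul_eq_append_s4 fun x hx y hy hxy => ?_
  rw [hVW, getLast?_append, hW_last] at hx
  rw [toWord_of, head?_singleton, Option.mem_some_iff] at hy
  subst hy
  cases hl : l.head? with
  | none => rw [hl, Option.map_none, Option.none_or, hV, Option.mem_some_iff] at hx; subst hx; rfl
  | some h =>
    rw [hl, Option.map_some, Option.some_or, Option.mem_some_iff] at hx
    subst hx
    exact absurd hxy (hbl h hl)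

theorem exists_isPrimitive_cyclRed_subword_prodPow (hc : c ∉ l) (hbc : b ≠ c)
    (hbl : ∀ a ∈ l.head?, a ≠ b) (hk : k ≠ 0) :
    ∃ p : FreeGroup α, IsPrimitive p ∧ CyclRed p ∧ Subword (prodPow (l ++ [c]) k) p := by
  refine ⟨prodPow (l ++ [c]) k * (prodPow l k)⁻¹ * of b, ?_, ?_, ?_⟩
  · rw [prodPow_append_singleton]
    exact isPrimitive_prodPow_mul_pow_mul_inv_mul hc hbc k
  · have hV : (prodPow (l ++ [c]) k).toWord.head? = (l ++ [c]).head?.map (·, true) := by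
      rw [toWord_prodPow, head?_flatMap_replicate hk]
    obtain ⟨d, hd⟩ : ∃ d, (l ++ [c]).head? = some d := by cases l <;> simp
    rw [CyclRed, toWord_prodPow_mul_inv_mul_of hc hbl hk, getLast?_concat, append_assoc,
      head?_append, hV, hd, Option.map_some, Option.some_or]
    simp
  · rw [Subword, toWord_prodPow_mul_inv_mul_of hc hbl hk, append_assoc]
    exact (prefix_append _ _).isInfix

end FreeGroup

/-- `x1^k ⋯ xr^k` is not primitivity-blocking in `F_r`, `r ≥ 3`. -/
theorem stmt4 (r k : ℕ) (hr : 3 ≤ r) (hk : 1 ≤ k) :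
    ∃ p : F r, IsPrimitive p ∧ CyclRed p ∧
      Subword ((List.ofFn fun i : Fin r => FreeGroup.of i ^ k).prod) p := by
  obtain ⟨n, rfl⟩ : ∃ n, r = n + 3 := ⟨r - 3, by omega⟩
  have hv : (List.ofFn fun i : Fin (n + 3) => of i ^ k).prod =
      prodPow ((List.finRange (n + 2)).map Fin.castSucc ++ [Fin.last (n + 2)]) k := by
    rw [← List.finRange_succ_last, List.ofFn_eq_map, prodPow]
  rw [hv]
  apply exists_isPrimitive_cyclRed_subword_prodPow (b := 1)
  · simp [Fin.castSucc_ne_last]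
  · simp [Fin.ext_iff]
  · simp [List.finRange_succ]
  · omega
end

section
/- In a free group, any element whose reduced word contains some generator y (to exponent ±1) exactly once is primitive. -/
open FreeGroup

private lemma split_one {α : Type*} (p : α → Bool) :
    ∀ L : List α, L.countP p = 1 →
      ∃ L1 x L2, L = L1 ++ x :: L2 ∧ p x ∧ L1.countP p = 0 ∧ L2.countP p = 0 := by
  intro L
  induction L with
  | nil => simp
  | cons a L ih =>
    intro h
    rw [List.countP_cons] at h
    by_cases hp : p a = true
    · rw [if_pos hp] at h
      exact ⟨[], a, L, by simp, hp, rfl, by omega⟩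
    · rw [if_neg hp] at h
      obtain ⟨L1, x, L2, hEq, hx, h1, h2⟩ := ih (by omega)
      exact ⟨a :: L1, x, L2, by simp [hEq], hx,
        by rw [List.countP_cons, if_neg hp]; omega, h2⟩

private lemma mk_single_true {α : Type*} (x : α) :
    FreeGroup.mk [(x, true)] = of x := rfl

private lemma mk_single_false {α : Type*} (x : α) :
    FreeGroup.mk [(x, false)] = (of x)⁻¹ := by
  rw [show (of x : FreeGroup α) = FreeGroup.mk [(x,true)] from rfl, FreeGroup.inv_mk]; rfl

private lemma hom_fix {α : Type*} [DecidableEq α] (y : α)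
    (f : FreeGroup α →* FreeGroup α) (hf : ∀ x, x ≠ y → f (of x) = of x) :
    ∀ L : List (α × Bool), (L.countP fun p => decide (p.1 = y)) = 0 →
      f (FreeGroup.mk L) = FreeGroup.mk L := by
  intro L
  induction L with
  | nil =>
    intro _
    rw [show FreeGroup.mk ([] : List (α × Bool)) = 1 from rfl, _root_.map_one]
  | cons p L ih =>
    intro h
    rw [List.countP_cons] at h
    have hp : p.1 ≠ y := by
      intro he
      rw [if_pos (by simp [he])] at h
      omega
    have hL : (L.countP fun p => decide (p.1 = y)) = 0 := by omega
    rw [show FreeGroup.mk (p :: L) = FreeGroup.mk [p] * FreeGroup.mk L by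
        rw [FreeGroup.mul_mk]; rfl,
      _root_.map_mul, ih hL]
    congr 1
    obtain ⟨x, b⟩ := p
    cases b
    · rw [mk_single_false, _root_.map_inv, hf x hp]
    · rw [mk_single_true, hf x hp]

/-- an element whose reduced word contains some generator
(to exponent `±1`) exactly once is primitive. -/
theorem stmt7 {α : Type*} [DecidableEq α] [Fintype α] (u : FreeGroup α) (y : α)
    (h : (u.toWord.countP fun p => decide (p.1 = y)) = 1) : IsPrimitive u := by
  obtain ⟨L1, ⟨x, s⟩, L2, hE, hx, h1, h2⟩ := split_one _ u.toWord h
  have hxy : x = y := by simpa using hx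
  subst hxy
  clear hx h
  set a : FreeGroup α := FreeGroup.mk L1 with ha
  set b : FreeGroup α := FreeGroup.mk L2 with hb
  set fφ : α → FreeGroup α := fun z => if z = x then a * FreeGroup.mk [(x, s)] * b else of z
    with hfφ
  set fψ : α → FreeGroup α := fun z =>
    if z = x then (if s then a⁻¹ * of x * b⁻¹ else b * (of x)⁻¹ * a) else of z with hfψ
  set φ := FreeGroup.lift fφ with hφdef
  set ψ := FreeGroup.lift fψ with hψdef
  have φfix : ∀ z, z ≠ x → φ (of z) = of z := by
    intro z hz; rw [hφdef, FreeGroup.lift_apply_of, hfφ]; simp [hz]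
  have ψfix : ∀ z, z ≠ x → ψ (of z) = of z := by
    intro z hz; rw [hψdef, FreeGroup.lift_apply_of, hfψ]; simp [hz]
  have φa : φ a = a := hom_fix x φ φfix L1 h1
  have φb : φ b = b := hom_fix x φ φfix L2 h2
  have ψa : ψ a = a := hom_fix x ψ ψfix L1 h1
  have ψb : ψ b = b := hom_fix x ψ ψfix L2 h2
  have φy : φ (of x) = a * FreeGroup.mk [(x, s)] * b := by
    rw [hφdef, FreeGroup.lift_apply_of, hfφ]; simp
  have ψy : ψ (of x) = (if s then a⁻¹ * of x * b⁻¹ else b * (of x)⁻¹ * a) := by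
    rw [hψdef, FreeGroup.lift_apply_of, hfψ]; simp
  have hψφ : ψ.comp φ = MonoidHom.id _ := by
    apply FreeGroup.ext_hom
    intro z
    by_cases hz : z = x
    · subst hz
      simp only [MonoidHom.comp_apply, MonoidHom.id_apply, φy, _root_.map_mul, ψa, ψb]
      cases s
      · rw [mk_single_false, _root_.map_inv, ψy]
        simp only [Bool.false_eq_true, if_false, mul_inv_rev, inv_inv]
        group
      · rw [mk_single_true, ψy]
        simp only [if_true]
        group
    · simp [MonoidHom.comp_apply, φfix z hz, ψfix z hz]
  have hφψ : φ.comp ψ = MonoidHom.id _ := by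
    apply FreeGroup.ext_hom
    intro z
    by_cases hz : z = x
    · subst hz
      simp only [MonoidHom.comp_apply, MonoidHom.id_apply, ψy]
      cases s
      · simp only [Bool.false_eq_true, if_false, _root_.map_mul, _root_.map_inv,
          φa, φb, φy, mk_single_false]
        group
      · simp only [if_true, _root_.map_mul, _root_.map_inv, φa, φb, φy, mk_single_true]
        group
    · simp [MonoidHom.comp_apply, φfix z hz, ψfix z hz]
  refine ⟨MonoidHom.toMulEquiv φ ψ hψφ hφψ, x, ?_⟩
  show φ (of x) = u
  rw [φy, ha, hb, FreeGroup.mul_mk, FreeGroup.mul_mk,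
    show L1 ++ [(x,s)] ++ L2 = L1 ++ (x,s) :: L2 by simp, ← hE, FreeGroup.mk_toWord]
end

section
/- For r > 2, no word of reduced length strictly less than 2r in the free group F_r is primitivity-blocking: every word of length < 2r is a subword of some cyclically reduced primitive element. -/
open FreeGroup

/-! A word `u` of length `< 2r` has a generator `x_k` occurring at most once. Appending one
letter `y` keeps `u` reduced and makes it cyclically reduced with `x_k` occurring exactly once:
take `y = x_k` if `x_k` does not occur in `u`; otherwise take `y = x_j^{±1}` with the sign of the
last letter of `u` and `j ≠ k` different from the generator of the first letter, which needs
`r > 2`. A word `a x_k^{±1} b` with `x_k` absent from `a` and `b` is primitive, being the image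
of `x_k` under the automorphism `x_k ↦ a x_k^{±1} b` fixing the other generators. -/

theorem List.exists_count_le_one_of_length_lt {β : Type*} [Fintype β] [DecidableEq β]
    (l : List β) (h : l.length < 2 * Fintype.card β) : ∃ b, l.count b ≤ 1 := by
  by_contra! hl
  have hsum : ∑ b, l.count b = l.length := by
    simpa using Multiset.sum_count_eq_card (m := (l : Multiset β)) fun _ _ => Finset.mem_univ _
  have : ∑ _b : β, 2 ≤ ∑ b, l.count b := Finset.sum_le_sum fun b _ => hl b
  simp only [Finset.sum_const, Finset.card_univ, smul_eq_mul, hsum] at this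
  omega

theorem FreeGroup.IsReduced.concat {α : Type*} {L : List (α × Bool)} (hL : IsReduced L)
    {y : α × Bool} (hy : ∀ x ∈ L.getLast?, x.1 = y.1 → x.2 = y.2) : IsReduced (L ++ [y]) :=
  hL.append IsReduced.singleton (by simpa using hy)

theorem FreeGroup.IsReduced.isCyclicallyReduced_concat {α : Type*} {L : List (α × Bool)}
    (hL : IsReduced L) {y : α × Bool} (hlast : ∀ x ∈ L.getLast?, x.1 = y.1 → x.2 = y.2)
    (hhead : ∀ x ∈ L.head?, y.1 = x.1 → y.2 = x.2) : IsCyclicallyReduced (L ++ [y]) := by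
  refine ⟨hL.concat hlast, ?_⟩
  simp only [List.getLast?_concat, Option.mem_some_iff]
  rintro _ rfl b hb
  cases L with
  | nil => simp_all
  | cons x L => exact hhead b hb

section

variable {α : Type*} [DecidableEq α]

theorem slender_of_len_lt [Fintype α] (w : FreeGroup α) (h : len w < 2 * Fintype.card α) :
    Slender w := by
  obtain ⟨x, hx⟩ :=
    (w.toWord.map Prod.fst).exists_count_le_one_of_length_lt (by simpa [len] using h)
  rw [List.count, List.countP_map] at hx
  exact ⟨x, hx⟩

theorem cyclRed_iff_isCyclicallyReduced (u : FreeGroup α) :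
    CyclRed u ↔ IsCyclicallyReduced u.toWord := by
  simp only [CyclRed, isCyclicallyReduced_iff, isReduced_toWord, true_and, ne_eq, Prod.ext_iff]
  exact ⟨fun h a ha b hb => by grind, fun h a ha b hb => by grind⟩

theorem toWord_mk_concat {L : List (α × Bool)} (hL : IsReduced L) {y : α × Bool}
    (hy : ∀ x ∈ L.getLast?, x.1 = y.1 → x.2 = y.2) : (mk (L ++ [y])).toWord = L ++ [y] := by
  rw [toWord_mk, (hL.concat hy).reduce_eq]

theorem FreeGroup.lift_update_mk_of_forall_ne {k : α} (t : FreeGroup α) {A : List (α × Bool)}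
    (hA : ∀ x ∈ A, x.1 ≠ k) : lift (Function.update of k t) (mk A) = mk A := by
  conv_rhs => rw [← lift_of_apply (mk A)]
  simp only [lift_mk]
  congr 1
  exact List.map_congr_left fun x hx => by rw [Function.update_of_ne (hA x hx)]

theorem isPrimitive_of_lift_update {k : α} {s t : FreeGroup α}
    (hs : lift (Function.update of k t) s = of k) (ht : lift (Function.update of k s) t = of k) :
    IsPrimitive s := by
  have comp_eq_id {a b : FreeGroup α} (h : lift (Function.update of k b) a = of k) :
      (lift (Function.update of k b)).comp (lift (Function.update of k a)) = MonoidHom.id _ := by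
    ext i
    rcases eq_or_ne i k with rfl | hi
    · simpa using h
    · simp [hi]
  exact ⟨(lift (Function.update of k s)).toMulEquiv _ (comp_eq_id hs) (comp_eq_id ht), k, by simp⟩

theorem isPrimitive_mk_append_cons {k : α} (ε : Bool) {A B : List (α × Bool)}
    (hA : ∀ x ∈ A, x.1 ≠ k) (hB : ∀ x ∈ B, x.1 ≠ k) : IsPrimitive (mk (A ++ (k, ε) :: B)) := by
  have hsplit : mk (A ++ (k, ε) :: B) = mk A * mk [(k, ε)] * mk B := by
    rw [mul_mk, mul_mk, List.append_assoc, List.singleton_append]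
  have hinv : mk [(k, false)] = (of k)⁻¹ := by rw [of, inv_mk]; rfl
  have fixA := fun t => lift_update_mk_of_forall_ne (k := k) t hA
  have fixB := fun t => lift_update_mk_of_forall_ne (k := k) t hB
  rw [hsplit]
  cases ε
  · refine isPrimitive_of_lift_update (k := k) (t := mk B * (of k)⁻¹ * mk A) ?_ ?_ <;>
      simp only [hinv, _root_.map_mul, _root_.map_inv, lift_apply_of, Function.update_self,
        fixA, fixB] <;>
      group
  · refine isPrimitive_of_lift_update (k := k) (t := (mk A)⁻¹ * of k * (mk B)⁻¹) ?_ ?_ <;>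
      simp only [← of.eq_def, _root_.map_mul, _root_.map_inv, lift_apply_of, Function.update_self,
        fixA, fixB] <;>
      group

theorem isPrimitive_mk_of_countP_eq_one {L : List (α × Bool)} {k : α}
    (h : L.countP (fun p => p.1 = k) = 1) : IsPrimitive (mk L) := by
  obtain ⟨x, hxL, hxk⟩ := List.countP_pos_iff.mp (h ▸ Nat.one_pos)
  obtain ⟨A, B, rfl⟩ := List.append_of_mem hxL
  rw [List.countP_append, List.countP_cons, if_pos hxk] at h
  have avoid {C : List (α × Bool)} (hC : C.countP (fun p => p.1 = k) = 0) :
      ∀ y ∈ C, y.1 ≠ k := by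
    simpa using List.countP_eq_zero.mp hC
  obtain ⟨x, ε⟩ := x
  obtain rfl : x = k := by simpa using hxk
  exact isPrimitive_mk_append_cons ε (avoid (by omega)) (avoid (by omega))

theorem exists_letter_countP_concat_eq_one [Fintype α] (hα : 2 < Fintype.card α)
    {L : List (α × Bool)} {k : α} (hk : L.countP (fun p => p.1 = k) ≤ 1) :
    ∃ y : α × Bool, (∀ x ∈ L.getLast?, x.1 = y.1 → x.2 = y.2) ∧
      (∀ x ∈ L.head?, y.1 = x.1 → y.2 = x.2) ∧ (L ++ [y]).countP (fun p => p.1 = k) = 1 := by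
  rcases Nat.le_one_iff_eq_zero_or_eq_one.mp hk with hk | hk
  · have avoid : ∀ x ∈ L, x.1 ≠ k := by simpa using List.countP_eq_zero.mp hk
    refine ⟨(k, true), fun x hx hxk => ?_, fun x hx hxk => ?_, by simp [hk]⟩
    · exact absurd hxk (avoid x (List.mem_of_mem_getLast? hx))
    · exact absurd hxk.symm (avoid x (List.mem_of_mem_head? hx))
  · obtain ⟨j, -, hj⟩ := Finset.exists_mem_notMem_of_card_lt_card
      (s := {k, (L.head?.getD (k, true)).1}) (t := Finset.univ)
      (Finset.card_le_two.trans_lt (by simpa using hα))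
    rw [Finset.mem_insert, Finset.mem_singleton, not_or] at hj
    refine ⟨(j, (L.getLast?.getD (j, true)).2), fun x hx _ => ?_, fun x hx hjx => ?_, ?_⟩
    · simp [Option.mem_def.mp hx]
    · rw [Option.mem_def.mp hx, Option.getD_some] at hj
      exact absurd hjx hj.2
    · simp [hk, hj.1]

end

/-- for `r > 2`, no word of length `< 2r` is primitivity-blocking. -/
theorem stmt9 (r : ℕ) (hr : 2 < r) (u : F r) (h : len u < 2 * r) :
    ∃ p : F r, IsPrimitive p ∧ CyclRed p ∧ Subword u p := by
  obtain ⟨k, hk⟩ := slender_of_len_lt u (by simpa using h)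
  obtain ⟨y, hlast, hhead, hcount⟩ :=
    exists_letter_countP_concat_eq_one (by simpa using hr) hk
  have hword := toWord_mk_concat isReduced_toWord hlast
  refine ⟨mk (u.toWord ++ [y]), isPrimitive_mk_of_countP_eq_one hcount, ?_, ?_⟩
  · rw [cyclRed_iff_isCyclicallyReduced, hword]
    exact IsReduced.isCyclicallyReduced_concat isReduced_toWord hlast hhead
  · rw [Subword, hword]
    exact (List.prefix_append _ _).isInfix
end
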